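/- Euler's identity: for |q|<1 and |t|<1, the sum over n ≥ 0 of t^n/(q;q)_n equals 1/(t;q)_∞. -/

import Mathlib

open scoped BigOperators

/-- `(q;q)_n = ∏_{k=1}^n (1 - q^k)` -/
noncomputable def qp (q : ℂ) (n : ℕ) : ℂ := ∏ k ∈ Finset.range n, (1 - q ^ (k + 1))

/-- `(q;q)_∞ = ∏_{k≥1} (1 - q^k)` -/
noncomputable def qpInf (q : ℂ) : ℂ := ∏' k : ℕ, (1 - q ^ (k + 1))

/-- `(a;q)_n = ∏_{k=1}^n (1 - a q^{k-1})` -/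
noncomputable def qpa (a q : ℂ) (n : ℕ) : ℂ := ∏ k ∈ Finset.range n, (1 - a * q ^ k)

/-- `(a;q)_∞ = ∏_{k≥0} (1 - a q^k)` -/
noncomputable def qpaInf (a q : ℂ) : ℂ := ∏' k : ℕ, (1 - a * q ^ k)

/-!
Write `S(x) = ∑ xⁿ/(q;q)ₙ`. Since `(q;q)ₙ` stays away from `0`, the series converges for
`‖x‖ < 1`, and comparing coefficients gives `(1 - x) S(x) = S(xq)`. Iterating,
`(t;q)_N S(t) = S(tq^N)`, and letting `N → ∞` the right side tends to `S(0) = 1`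
while the left side tends to `(t;q)_∞ S(t)`.
-/

open Filter Topology Finset

noncomputable def eulerSeries (q x : ℂ) : ℂ := ∑' n : ℕ, x ^ n / qp q n

lemma exists_pos_le_prod_one_sub {a : ℕ → ℝ} (ha : ∀ k, 0 ≤ a k) (ha1 : ∀ k, a k < 1)
    (hsum : Summable a) : ∃ C > 0, ∀ n, C ≤ ∏ k ∈ range n, (1 - a k) := by
  have hsum' : Summable fun k => ‖-a k‖ := by simpa [abs_of_nonneg (ha _)] using hsum
  have hfac : ∀ k, 0 < 1 + -a k := fun k => by linarith [ha1 k]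
  have hprod := (multipliable_one_add_of_summable hsum').hasProd.tendsto_prod_nat
  have hanti : Antitone fun n => ∏ k ∈ range n, (1 + -a k) :=
    antitone_nat_of_succ_le fun n => by
      rw [prod_range_succ]
      exact mul_le_of_le_one_right (prod_nonneg fun k _ => (hfac k).le) (by linarith [ha n])
  have hnonneg : 0 ≤ ∏' k, (1 + -a k) :=
    ge_of_tendsto' hprod fun n => prod_nonneg fun k _ => (hfac k).le
  have hne : ∏' k, (1 + -a k) ≠ 0 :=
    tprod_one_add_ne_zero_of_summable (fun k => (hfac k).ne') hsum'
  exact ⟨_, lt_of_le_of_ne hnonneg hne.symm, fun n => by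
    simpa only [← sub_eq_add_neg] using hanti.le_of_tendsto hprod n⟩

lemma qp_succ (q : ℂ) (n : ℕ) : qp q (n + 1) = qp q n * (1 - q ^ (n + 1)) :=
  prod_range_succ _ _

section

variable {q : ℂ}

lemma one_sub_pow_succ_ne_zero (hq : ‖q‖ < 1) (k : ℕ) : 1 - q ^ (k + 1) ≠ 0 := by
  intro h
  have : ‖q ^ (k + 1)‖ < 1 := by
    rw [norm_pow]; exact pow_lt_one₀ (norm_nonneg q) hq k.add_one_ne_zero
  simp [← sub_eq_zero.mp h] at this

lemma qp_ne_zero (hq : ‖q‖ < 1) (n : ℕ) : qp q n ≠ 0 :=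
  prod_ne_zero_iff.mpr fun k _ => one_sub_pow_succ_ne_zero hq k

lemma norm_mul_pow_le (hq : ‖q‖ ≤ 1) (t : ℂ) (N : ℕ) : ‖t * q ^ N‖ ≤ ‖t‖ := by
  rw [norm_mul, norm_pow]
  exact mul_le_of_le_one_right (norm_nonneg t) (pow_le_one₀ (norm_nonneg q) hq)

lemma exists_pos_le_norm_qp (hq : ‖q‖ < 1) : ∃ C > 0, ∀ n, C ≤ ‖qp q n‖ := by
  obtain ⟨C, hC, hle⟩ := exists_pos_le_prod_one_sub (a := fun k => ‖q‖ ^ (k + 1))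
    (fun k => by positivity) (fun k => pow_lt_one₀ (norm_nonneg q) hq k.add_one_ne_zero)
    ((summable_geometric_of_lt_one (norm_nonneg q) hq).mul_left ‖q‖ |>.congr
      fun k => (pow_succ' _ _).symm)
  refine ⟨C, hC, fun n => (hle n).trans ?_⟩
  rw [qp, norm_prod]
  refine prod_le_prod (fun k _ => ?_) (fun k _ => ?_)
  · linarith [pow_lt_one₀ (norm_nonneg q) hq k.add_one_ne_zero]
  · simpa using norm_sub_norm_le (1 : ℂ) (q ^ (k + 1))

lemma exists_norm_pow_div_qp_le (hq : ‖q‖ < 1) :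
    ∃ C > 0, ∀ x n, ‖x ^ n / qp q n‖ ≤ C * ‖x‖ ^ n := by
  obtain ⟨C, hC, hle⟩ := exists_pos_le_norm_qp hq
  refine ⟨C⁻¹, inv_pos.mpr hC, fun x n => ?_⟩
  rw [norm_div, norm_pow, div_eq_mul_inv, mul_comm]
  gcongr
  exact hle n

lemma summable_pow_div_qp (hq : ‖q‖ < 1) {x : ℂ} (hx : ‖x‖ < 1) :
    Summable fun n => x ^ n / qp q n := by
  obtain ⟨C, -, hC⟩ := exists_norm_pow_div_qp_le hq
  exact .of_norm_bounded ((summable_geometric_of_lt_one (norm_nonneg x) hx).mul_left C) (hC x)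

lemma eulerSeries_sub_eulerSeries_mul (hq : ‖q‖ < 1) {x : ℂ} (hx : ‖x‖ < 1) :
    eulerSeries q x - eulerSeries q (x * q) = x * eulerSeries q x := by
  have hxq : ‖x * q‖ < 1 := by
    rw [norm_mul]; nlinarith [norm_nonneg x, norm_nonneg q]
  have hS := summable_pow_div_qp hq hx
  have hsub := hS.sub (summable_pow_div_qp hq hxq)
  have hcoeff (n : ℕ) : x ^ (n + 1) / qp q (n + 1) - (x * q) ^ (n + 1) / qp q (n + 1) =
      x * (x ^ n / qp q n) := by
    have := one_sub_pow_succ_ne_zero hq n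
    have := qp_ne_zero hq n
    rw [qp_succ]
    field_simp
    ring
  rw [eulerSeries, eulerSeries, ← hS.tsum_sub (summable_pow_div_qp hq hxq),
    hsub.tsum_eq_zero_add, ← tsum_mul_left]
  simp only [pow_zero, sub_self, zero_add, hcoeff]

lemma qpa_mul_eulerSeries (hq : ‖q‖ < 1) {t : ℂ} (ht : ‖t‖ < 1) (N : ℕ) :
    qpa t q N * eulerSeries q t = eulerSeries q (t * q ^ N) := by
  induction N with
  | zero => simp [qpa]
  | succ N ih =>
    have := eulerSeries_sub_eulerSeries_mul hq ((norm_mul_pow_le hq.le t N).trans_lt ht)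
    rw [qpa, prod_range_succ, ← qpa, mul_right_comm, ih, pow_succ, ← mul_assoc]
    linear_combination this

lemma tendsto_eulerSeries_mul_pow (hq : ‖q‖ < 1) {t : ℂ} (ht : ‖t‖ < 1) :
    Tendsto (fun N : ℕ => eulerSeries q (t * q ^ N)) atTop (𝓝 1) := by
  obtain ⟨C, hC0, hC⟩ := exists_norm_pow_div_qp_le hq
  have hpow : Tendsto (fun N : ℕ => t * q ^ N) atTop (𝓝 0) := by
    simpa using (tendsto_pow_atTop_nhds_zero_of_norm_lt_one hq).const_mul t
  have hS0 : ∑' n : ℕ, (0 : ℂ) ^ n / qp q n = 1 := by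
    rw [tsum_eq_single 0 fun n hn => by simp [zero_pow hn]]
    simp [qp]
  rw [← hS0]
  refine tendsto_tsum_of_dominated_convergence
    ((summable_geometric_of_lt_one (norm_nonneg t) ht).mul_left C)
    (fun n => (hpow.pow n).div_const _) (.of_forall fun N n => (hC _ n).trans ?_)
  gcongr
  exact norm_mul_pow_le hq.le t N

lemma multipliable_one_sub_mul_pow (hq : ‖q‖ < 1) (t : ℂ) :
    Multipliable fun k : ℕ => 1 - t * q ^ k := by
  simpa only [← sub_eq_add_neg] using Complex.multipliable_one_add_of_summable
    (f := fun k : ℕ => -(t * q ^ k))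
    ((summable_geometric_of_lt_one (norm_nonneg q) hq).mul_left ‖t‖ |>.of_norm_bounded
      fun k => by simp [norm_pow])

end

/-- Euler's identity. -/
theorem euler_first (q t : ℂ) (hq : ‖q‖ < 1) (ht : ‖t‖ < 1) :
    ∑' n : ℕ, t ^ n / qp q n = 1 / qpaInf t q := by
  have hlim : Tendsto (fun N => qpa t q N * eulerSeries q t) atTop
      (𝓝 (qpaInf t q * eulerSeries q t)) :=
    (multipliable_one_sub_mul_pow hq t).hasProd.tendsto_prod_nat.mul_const _
  simp only [qpa_mul_eulerSeries hq ht] at hlim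
  exact eq_one_div_of_mul_eq_one_right
    (tendsto_nhds_unique hlim (tendsto_eulerSeries_mul_pow hq ht))
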